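/- Let E be the sub-effect algebra of the product ∏_{n≥1} {0_n, a_n, 1_n} (each factor a 3-element chain effect algebra with a_n ⊕ a_n = 1_n) consisting of sequences with at most finitely many coordinates equal to a_n. Then E is a sharply dominating Archimedean atomic MV-effect algebra which is not sharply orthocomplete, and S(E) = C(E) = ∏_{n≥1} {0_n, 1_n} is a complete Boolean algebra bifull in E. -/

import Mathlib

universe u v

/-- An effect algebra: a partial algebra `(E; ⊕, 0, 1)` with `0 ≠ 1`, where `⊕` is
partially defined (domain `D`), commutative and associative where defined, every
element has a unique orthosupplement (`compl`, skolemizing axiom (Eiii)), and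
`1 ⊕ x` defined implies `x = 0`. -/
structure EffectAlgebra (E : Type u) where
  D : E → E → Prop
  oplus : E → E → E
  zero : E
  one : E
  zero_ne_one : zero ≠ one
  D_comm : ∀ x y, D x y → D y x
  oplus_comm : ∀ x y, D x y → oplus x y = oplus y x
  assoc : ∀ x y z, D x y → D (oplus x y) z →
      D y z ∧ D x (oplus y z) ∧ oplus (oplus x y) z = oplus x (oplus y z)
  assoc' : ∀ x y z, D y z → D x (oplus y z) →
      D x y ∧ D (oplus x y) z ∧ oplus (oplus x y) z = oplus x (oplus y z)
  compl : E → E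
  D_compl : ∀ x, D x (compl x)
  oplus_compl : ∀ x, oplus x (compl x) = one
  compl_unique : ∀ x y, D x y → oplus x y = one → y = compl x
  one_max : ∀ x, D one x → x = zero

namespace EffectAlgebra

variable {E : Type u} (A : EffectAlgebra E)

/-- The induced order: `x ≤ y` iff `x ⊕ z = y` for some `z`. -/
def le (x y : E) : Prop := ∃ z, A.D x z ∧ A.oplus x z = y

def IsLB (S : Set E) (m : E) : Prop := ∀ x ∈ S, A.le m x
def IsUB (S : Set E) (m : E) : Prop := ∀ x ∈ S, A.le x m

/-- `m` is the infimum of `S` computed within the subposet `P`. -/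
def IsInfIn (P : Set E) (S : Set E) (m : E) : Prop :=
  m ∈ P ∧ A.IsLB S m ∧ ∀ z ∈ P, A.IsLB S z → A.le z m

/-- `m` is the supremum of `S` computed within the subposet `P`. -/
def IsSupIn (P : Set E) (S : Set E) (m : E) : Prop :=
  m ∈ P ∧ A.IsUB S m ∧ ∀ z ∈ P, A.IsUB S z → A.le m z

/-- `w` is sharp iff the meet `w ∧ w'` exists in `E` and equals `0`. -/
def Sharp (w : E) : Prop := A.IsInfIn Set.univ {w, A.compl w} A.zero

/-- The set `S(E)` of sharp elements. -/
def sharpSet : Set E := {w | A.Sharp w}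

def HasMeet (x y : E) : Prop := ∃ m, A.IsInfIn Set.univ {x, y} m
def HasJoin (x y : E) : Prop := ∃ j, A.IsSupIn Set.univ {x, y} j

/-- Every `x` has a least sharp element above it, which is the infimum of the sharp
elements above `x` both in `E` and in `S(E)`. -/
def SharplyDominating : Prop :=
  ∀ x : E, ∃ w, A.Sharp w ∧ A.le x w ∧
    A.IsInfIn Set.univ {v | A.Sharp v ∧ A.le x v} w ∧
    A.IsInfIn A.sharpSet {v | A.Sharp v ∧ A.le x v} w

/-- Sharply dominating, and `x ∧ w` exists for every `x ∈ E`, `w ∈ S(E)`. -/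
def SDominating : Prop :=
  A.SharplyDominating ∧ ∀ x w : E, A.Sharp w → A.HasMeet x w

end EffectAlgebra

/-- `SumDef A l s` : the orthosum of the finite list `l` is defined and equals `s`. -/
inductive EffectAlgebra.SumDef {E : Type u} (A : EffectAlgebra E) : List E → E → Prop
  | nil : EffectAlgebra.SumDef A [] A.zero
  | cons {x : E} {l : List E} {s : E} : EffectAlgebra.SumDef A l s → A.D x s →
      EffectAlgebra.SumDef A (x :: l) (A.oplus x s)

namespace EffectAlgebra

variable {E : Type u} (A : EffectAlgebra E)

/-- A family is orthogonal iff every finite subfamily has a defined orthosum. -/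
def Orthogonal {ι : Type v} (x : ι → E) : Prop :=
  ∀ l : List ι, l.Nodup → ∃ s, A.SumDef (l.map x) s

/-- The set of finite partial orthosums of a family. -/
def finiteSums {ι : Type v} (x : ι → E) : Set E :=
  {s | ∃ l : List ι, l.Nodup ∧ A.SumDef (l.map x) s}

/-- `v = ⊕ x` : the family is orthogonal and `v` is the supremum in `E` of all
finite partial orthosums. -/
def HasOrthoSum {ι : Type v} (x : ι → E) (v : E) : Prop :=
  A.Orthogonal x ∧ A.IsSupIn Set.univ (A.finiteSums x) v

/-- Every family dominated elementwise by an orthogonal family of sharp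
elements has an orthosum. -/
def SharplyOrthocomplete : Prop :=
  ∀ (ι : Type u) (x w : ι → E), (∀ k, A.Sharp (w k)) → A.Orthogonal w →
    (∀ k, A.le (x k) (w k)) → ∃ v, A.HasOrthoSum x v

/-- `c` is central: for every `y` the meets `y ∧ c`, `y ∧ c'` exist and
`y = (y ∧ c) ∨ (y ∧ c')`. -/
def Central (c : E) : Prop :=
  ∀ y : E, ∃ m₁ m₂, A.IsInfIn Set.univ {y, c} m₁ ∧
    A.IsInfIn Set.univ {y, A.compl c} m₂ ∧ A.IsSupIn Set.univ {m₁, m₂} y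

/-- The center `C(E)`. -/
def centerSet : Set E := {c | A.Central c}

def CentrallyDominating : Prop :=
  ∀ x : E, ∃ c, A.Central c ∧ A.le x c ∧
    A.IsInfIn Set.univ {d | A.Central d ∧ A.le x d} c ∧
    A.IsInfIn A.centerSet {d | A.Central d ∧ A.le x d} c

def CentrallyOrthocomplete : Prop :=
  ∀ (ι : Type u) (x c : ι → E), (∀ k, A.Central (c k)) → A.Orthogonal c →
    (∀ k, A.le (x k) (c k)) → ∃ v, A.HasOrthoSum x v

/-- `P` is bifull in `E`: for `S ⊆ P`, the join of `S` in `P` exists iff the join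
of `S` in `E` exists, and then they coincide. -/
def Bifull (P : Set E) : Prop :=
  ∀ S ⊆ P, (∀ s, A.IsSupIn P S s → A.IsSupIn Set.univ S s) ∧
    (∀ s, A.IsSupIn Set.univ S s → A.IsSupIn P S s)

/-- The subposet `P` is a complete lattice: every subset of `P` has a supremum
(and an infimum) computed within `P`. -/
def CompleteIn (P : Set E) : Prop :=
  ∀ S ⊆ P, (∃ s, A.IsSupIn P S s) ∧ (∃ m, A.IsInfIn P S m)

/-- `E` is a complete lattice. -/
def Complete : Prop :=
  ∀ S : Set E, (∃ s, A.IsSupIn Set.univ S s) ∧ (∃ m, A.IsInfIn Set.univ S m)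

/-- The induced order of `E` is a lattice. -/
def LatticeOrdered : Prop := ∀ x y : E, A.HasMeet x y ∧ A.HasJoin x y

/-- `x ↔ y` : `x ∨ y = x ⊕ (y ⊖ (x ∧ y))`. -/
def Compatible (x y : E) : Prop :=
  ∃ m j z, A.IsInfIn Set.univ {x, y} m ∧ A.IsSupIn Set.univ {x, y} j ∧
    A.D m z ∧ A.oplus m z = y ∧ A.D x z ∧ A.oplus x z = j

/-- An MV-effect algebra: a lattice effect algebra all of whose pairs of elements
are compatible. -/
def MV : Prop := A.LatticeOrdered ∧ ∀ x y : E, A.Compatible x y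

/-- `nx = x ⊕ ⋯ ⊕ x` (`n` times) is defined. -/
def nTimesDef (n : ℕ) (x : E) : Prop := ∃ s, A.SumDef (List.replicate n x) s

/-- `ord x < ∞` for every nonzero `x`. -/
def IsArchimedean : Prop := ∀ x : E, x ≠ A.zero → ∃ n : ℕ, ¬ A.nTimesDef n x

def Atom (a : E) : Prop := a ≠ A.zero ∧ ∀ b, A.le b a → b = A.zero ∨ b = a

def Atomic : Prop := ∀ x : E, x ≠ A.zero → ∃ a, A.Atom a ∧ A.le a x

/-- The subposet `P` (closed under `'`) is an orthomodular lattice. -/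
def OrthomodularIn (P : Set E) : Prop :=
  (∀ x ∈ P, ∀ y ∈ P, (∃ m, A.IsInfIn P {x, y} m) ∧ (∃ j, A.IsSupIn P {x, y} j)) ∧
  A.zero ∈ P ∧ A.one ∈ P ∧ (∀ x ∈ P, A.compl x ∈ P) ∧
  (∀ x ∈ P, A.IsInfIn P {x, A.compl x} A.zero ∧ A.IsSupIn P {x, A.compl x} A.one) ∧
  (∀ x ∈ P, ∀ y ∈ P, A.le x y →
    ∃ m, A.IsInfIn P {y, A.compl x} m ∧ A.IsSupIn P {x, m} y)

def DistributiveIn (P : Set E) : Prop :=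
  ∀ x ∈ P, ∀ y ∈ P, ∀ z ∈ P, ∀ jyz mxy mxz m : E,
    A.IsSupIn P {y, z} jyz → A.IsInfIn P {x, y} mxy → A.IsInfIn P {x, z} mxz →
    A.IsInfIn P {x, jyz} m → A.IsSupIn P {mxy, mxz} m

/-- The subposet `P` is a Boolean algebra (complemented distributive lattice with
bounds, complement given by `'`). -/
def BooleanIn (P : Set E) : Prop :=
  (∀ x ∈ P, ∀ y ∈ P, (∃ m, A.IsInfIn P {x, y} m) ∧ (∃ j, A.IsSupIn P {x, y} j)) ∧
  A.zero ∈ P ∧ A.one ∈ P ∧ (∀ x ∈ P, A.compl x ∈ P) ∧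
  (∀ x ∈ P, A.IsInfIn P {x, A.compl x} A.zero ∧ A.IsSupIn P {x, A.compl x} A.one) ∧
  A.DistributiveIn P

/-- A block: a maximal set of pairwise compatible elements. -/
def Block (M : Set E) : Prop :=
  (∀ x ∈ M, ∀ y ∈ M, A.Compatible x y) ∧
  ∀ N : Set E, M ⊆ N → (∀ x ∈ N, ∀ y ∈ N, A.Compatible x y) → N = M

def AtomIn (M : Set E) (a : E) : Prop :=
  a ∈ M ∧ a ≠ A.zero ∧ ∀ b ∈ M, A.le b a → b = A.zero ∨ b = a

def AtomicIn (M : Set E) : Prop :=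
  ∀ x ∈ M, x ≠ A.zero → ∃ a, A.AtomIn M a ∧ A.le a x

end EffectAlgebra

/-! The effect-algebra order of `E` is the coordinatewise order of `{0, a, 1} ≅ {0, 1, 2}`,
so `E` is a distributive lattice, `0`, `1` and `'` are forced by `⊕`, and every claim becomes
arithmetic in each coordinate. The sharp elements are the `{0, 1}`-valued sequences;
coordinatewise suprema and infima of such sequences are again `{0, 1}`-valued, hence lie in `E`,
which makes `S(E)` complete and bifull. Sharp orthocompleteness fails for the atoms `aₙ ≤ 1ₙ`:
every sequence without a coordinate `0` bounds their finite orthosums, and the least such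
sequence, the constant `a`, is not in `E`. -/

theorem List.Nodup.sum_map_ite_eq {α M : Type*} [DecidableEq α] [AddCommMonoid M] {l : List α}
    (hl : l.Nodup) (a : α) (c : M) :
    (l.map fun k => if a = k then c else 0).sum = if a ∈ l then c else 0 := by
  rw [← List.sum_toFinset _ hl, Finset.sum_ite_eq]
  simp

namespace EffectAlgebra

variable {E : Type u} {A : EffectAlgebra E}

theorem le_one (x : E) : A.le x A.one := ⟨A.compl x, A.D_compl x, A.oplus_compl x⟩

theorem IsInfIn.of_univ {P S : Set E} {m : E} (h : A.IsInfIn Set.univ S m) (hm : m ∈ P) :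
    A.IsInfIn P S m :=
  ⟨hm, h.2.1, fun z _ hz => h.2.2 z (Set.mem_univ _) hz⟩

theorem IsSupIn.of_univ {P S : Set E} {s : E} (h : A.IsSupIn Set.univ S s) (hs : s ∈ P) :
    A.IsSupIn P S s :=
  ⟨hs, h.2.1, fun z _ hz => h.2.2 z (Set.mem_univ _) hz⟩

section PartialOrder

variable [PartialOrder E] (hle : ∀ x y, A.le x y ↔ x ≤ y)
include hle

theorem isInfIn_univ_iff {S : Set E} {m : E} : A.IsInfIn Set.univ S m ↔ IsGLB S m := by
  simp only [IsInfIn, IsLB, hle, Set.mem_univ, true_implies, true_and]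
  rfl

theorem isSupIn_univ_iff {S : Set E} {s : E} : A.IsSupIn Set.univ S s ↔ IsLUB S s := by
  simp only [IsSupIn, IsUB, hle, Set.mem_univ, true_implies, true_and]
  rfl

theorem isInfIn_iff_eq {P S : Set E} {m₀ m : E} (h₀ : IsGLB S m₀) (hm₀ : m₀ ∈ P) :
    A.IsInfIn P S m ↔ m = m₀ := by
  constructor
  · rintro ⟨hm, hlb, hgreatest⟩
    refine le_antisymm (h₀.2 fun x hx => (hle _ _).1 (hlb x hx)) ((hle _ _).1 ?_)
    exact hgreatest m₀ hm₀ fun x hx => (hle _ _).2 (h₀.1 hx)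
  · rintro rfl
    exact ((isInfIn_univ_iff hle).2 h₀).of_univ hm₀

theorem isSupIn_iff_eq {P S : Set E} {s₀ s : E} (h₀ : IsLUB S s₀) (hs₀ : s₀ ∈ P) :
    A.IsSupIn P S s ↔ s = s₀ := by
  constructor
  · rintro ⟨hs, hub, hleast⟩
    refine le_antisymm ((hle _ _).1 ?_) (h₀.2 fun x hx => (hle _ _).1 (hub x hx))
    exact hleast s₀ hs₀ fun x hx => (hle _ _).2 (h₀.1 hx)
  · rintro rfl
    exact ((isSupIn_univ_iff hle).2 h₀).of_univ hs₀

theorem completeIn_of_exists_isLUB_isGLB {P : Set E} (hsup : ∀ S ⊆ P, ∃ s ∈ P, IsLUB S s)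
    (hinf : ∀ S ⊆ P, ∃ m ∈ P, IsGLB S m) : A.CompleteIn P := by
  intro S hS
  obtain ⟨s, hsP, hs⟩ := hsup S hS
  obtain ⟨m, hmP, hm⟩ := hinf S hS
  exact ⟨⟨s, (isSupIn_iff_eq hle hs hsP).2 rfl⟩, ⟨m, (isInfIn_iff_eq hle hm hmP).2 rfl⟩⟩

theorem bifull_of_exists_isLUB {P : Set E} (hsup : ∀ S ⊆ P, ∃ s ∈ P, IsLUB S s) :
    A.Bifull P := by
  intro S hS
  obtain ⟨s₀, hs₀P, hs₀⟩ := hsup S hS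
  have hP := fun s => isSupIn_iff_eq (A := A) hle (P := P) (s := s) hs₀ hs₀P
  have hE := fun s => isSupIn_iff_eq (A := A) hle (P := Set.univ) (s := s) hs₀ (Set.mem_univ _)
  exact ⟨fun s h => (hE s).2 ((hP s).1 h), fun s h => (hP s).2 ((hE s).1 h)⟩

theorem sharplyDominating_of_isLeast
    (h : ∀ x, ∃ w, IsLeast {v | A.Sharp v ∧ x ≤ v} w) : A.SharplyDominating := by
  intro x
  obtain ⟨w, hw⟩ := h x
  have hset : {v | A.Sharp v ∧ A.le x v} = {v | A.Sharp v ∧ x ≤ v} := by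
    simp only [hle]
  rw [hset]
  exact ⟨w, hw.1.1, (hle _ _).2 hw.1.2, (isInfIn_iff_eq hle hw.isGLB (Set.mem_univ _)).2 rfl,
    (isInfIn_iff_eq hle hw.isGLB hw.1.1).2 rfl⟩

end PartialOrder

section Lattice

variable [Lattice E] (hle : ∀ x y, A.le x y ↔ x ≤ y)
include hle

theorem isInfIn_univ_pair_iff {x y m : E} : A.IsInfIn Set.univ {x, y} m ↔ m = x ⊓ y :=
  isInfIn_iff_eq hle isGLB_pair (Set.mem_univ _)

theorem isSupIn_univ_pair_iff {x y s : E} : A.IsSupIn Set.univ {x, y} s ↔ s = x ⊔ y :=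
  isSupIn_iff_eq hle isLUB_pair (Set.mem_univ _)

theorem latticeOrdered : A.LatticeOrdered := fun x y =>
  ⟨⟨x ⊓ y, (isInfIn_univ_pair_iff hle).2 rfl⟩,
    ⟨x ⊔ y, (isSupIn_univ_pair_iff hle).2 rfl⟩⟩

theorem sharp_iff_inf_compl_eq {w : E} : A.Sharp w ↔ w ⊓ A.compl w = A.zero :=
  (isInfIn_univ_pair_iff hle).trans eq_comm

theorem central_iff {c : E} : A.Central c ↔ ∀ y, y ⊓ c ⊔ y ⊓ A.compl c = y := by
  refine forall_congr' fun y => ⟨?_, fun h => ⟨_, _, (isInfIn_univ_pair_iff hle).2 rfl,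
    (isInfIn_univ_pair_iff hle).2 rfl, (isSupIn_univ_pair_iff hle).2 h.symm⟩⟩
  rintro ⟨m₁, m₂, h₁, h₂, h₃⟩
  rw [isInfIn_univ_pair_iff hle] at h₁ h₂
  rw [isSupIn_univ_pair_iff hle, h₁, h₂] at h₃
  exact h₃.symm

theorem compatible_of_oplus {x y z : E} (hmz : A.D (x ⊓ y) z) (hmz' : A.oplus (x ⊓ y) z = y)
    (hxz : A.D x z) (hxz' : A.oplus x z = x ⊔ y) : A.Compatible x y :=
  ⟨x ⊓ y, x ⊔ y, z, (isInfIn_univ_pair_iff hle).2 rfl, (isSupIn_univ_pair_iff hle).2 rfl,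
    hmz, hmz', hxz, hxz'⟩

end Lattice

theorem booleanIn_of_closed [DistribLattice E] (hle : ∀ x y, A.le x y ↔ x ≤ y) {P : Set E}
    (hinf : ∀ x ∈ P, ∀ y ∈ P, x ⊓ y ∈ P)
    (hsup : ∀ x ∈ P, ∀ y ∈ P, x ⊔ y ∈ P)
    (hzero : A.zero ∈ P) (hone : A.one ∈ P) (hcompl : ∀ x ∈ P, A.compl x ∈ P)
    (hinf_compl : ∀ x ∈ P, x ⊓ A.compl x = A.zero)
    (hsup_compl : ∀ x ∈ P, x ⊔ A.compl x = A.one) : A.BooleanIn P := by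
  have hInf : ∀ x ∈ P, ∀ y ∈ P, ∀ m, A.IsInfIn P {x, y} m ↔ m = x ⊓ y :=
    fun x hx y hy _ => isInfIn_iff_eq hle isGLB_pair (hinf x hx y hy)
  have hSup : ∀ x ∈ P, ∀ y ∈ P, ∀ s, A.IsSupIn P {x, y} s ↔ s = x ⊔ y :=
    fun x hx y hy _ => isSupIn_iff_eq hle isLUB_pair (hsup x hx y hy)
  refine ⟨fun x hx y hy => ⟨⟨_, (hInf x hx y hy _).2 rfl⟩,
      ⟨_, (hSup x hx y hy _).2 rfl⟩⟩,
    hzero, hone, hcompl, fun x hx => ⟨?_, ?_⟩, ?_⟩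
  · rw [hInf x hx _ (hcompl x hx), hinf_compl x hx]
  · rw [hSup x hx _ (hcompl x hx), hsup_compl x hx]
  · intro x hx y hy z hz jyz mxy mxz m hjyz hmxy hmxz hm
    rw [hSup y hy z hz] at hjyz
    rw [hInf x hx y hy] at hmxy
    rw [hInf x hx z hz] at hmxz
    subst hjyz hmxy hmxz
    rw [hInf x hx _ (hsup y hy z hz)] at hm
    rw [hSup _ (hinf x hx y hy) _ (hinf x hx z hz), hm, inf_sup_left]

end EffectAlgebra

abbrev FinHalfSeq : Type := {f : ℕ → Fin 3 // {n | f n = 1}.Finite}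

open EffectAlgebra

namespace FinHalfSeq

instance : Lattice FinHalfSeq :=
  Subtype.lattice
    (fun f g hf hg => (hf.union hg).subset fun n hn =>
      (max_choice (f n) (g n)).imp (fun h => by simp_all) (fun h => by simp_all))
    (fun f g hf hg => (hf.union hg).subset fun n hn =>
      (min_choice (f n) (g n)).imp (fun h => by simp_all) (fun h => by simp_all))

instance : DistribLattice FinHalfSeq where
  le_sup_inf a b c := le_sup_inf (α := ℕ → Fin 3) (x := a.1) (y := b.1) (z := c.1)

theorem le_def {f g : FinHalfSeq} : f ≤ g ↔ ∀ n, (f.1 n : ℕ) ≤ g.1 n := Iff.rfl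

@[simp] theorem inf_apply (f g : FinHalfSeq) (n : ℕ) :
    ((f ⊓ g).1 n : ℕ) = min (f.1 n : ℕ) (g.1 n) := rfl

@[simp] theorem sup_apply (f g : FinHalfSeq) (n : ℕ) :
    ((f ⊔ g).1 n : ℕ) = max (f.1 n : ℕ) (g.1 n) := rfl

theorem ext_val {f g : FinHalfSeq} (h : ∀ n, (f.1 n : ℕ) = g.1 n) : f = g :=
  Subtype.ext (funext fun n => Fin.ext (h n))

theorem val_le_two (f : FinHalfSeq) (n : ℕ) : (f.1 n : ℕ) ≤ 2 := Fin.is_le _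

theorem finite_val_eq_one (f : FinHalfSeq) : {n | (f.1 n : ℕ) = 1}.Finite :=
  f.2.subset fun _ hn => Fin.ext hn

def ofNat (v : ℕ → ℕ) (hv : ∀ n, v n ≤ 2) (hfin : {n | v n = 1}.Finite) : FinHalfSeq :=
  ⟨fun n => ⟨v n, Nat.lt_succ_of_le (hv n)⟩, hfin.subset fun _ hn => congrArg Fin.val hn⟩

@[simp] theorem ofNat_apply (v : ℕ → ℕ) (hv hfin) (n : ℕ) :
    ((ofNat v hv hfin).1 n : ℕ) = v n := rfl

open Classical in
noncomputable def ofSet (s : Set ℕ) : FinHalfSeq :=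
  ofNat (fun n => if n ∈ s then 2 else 0) (fun n => by split_ifs <;> omega)
    (Set.finite_empty.subset fun n (hn : _ = 1) => by split_ifs at hn; omega)

open Classical in
@[simp] theorem ofSet_apply (s : Set ℕ) (n : ℕ) :
    ((ofSet s).1 n : ℕ) = if n ∈ s then 2 else 0 := rfl

def atom (k : ℕ) : FinHalfSeq :=
  ofNat (fun n => if n = k then 1 else 0) (fun n => by split_ifs <;> omega)
    ((Set.finite_singleton k).subset fun n hn => by
      simp only [Set.mem_ofPred_eq] at hn; split_ifs at hn with h; exact h)

@[simp] theorem atom_apply (k n : ℕ) : ((atom k).1 n : ℕ) = if n = k then 1 else 0 := rfl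

variable {A : EffectAlgebra FinHalfSeq}
  (hD : ∀ f g, A.D f g ↔ ∀ n, (f.1 n : ℕ) + (g.1 n : ℕ) ≤ 2)
  (hoplus : ∀ f g, A.D f g → ∀ n, ((A.oplus f g).1 n : ℕ) = (f.1 n : ℕ) + (g.1 n : ℕ))
include hD hoplus

theorem effect_le_iff (f g : FinHalfSeq) : A.le f g ↔ f ≤ g := by
  rw [le_def]
  constructor
  · rintro ⟨z, hz, rfl⟩ n
    rw [hoplus f z hz n]
    omega
  · intro h
    have hv : ∀ n, (g.1 n : ℕ) - f.1 n ≤ 2 := fun n => by have := val_le_two g n; omega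
    let d := ofNat (fun n => (g.1 n : ℕ) - f.1 n) hv
      (((finite_val_eq_one f).union (finite_val_eq_one g)).subset fun n hn => by
        have := h n
        have := val_le_two g n
        simp only [Set.mem_union, Set.mem_ofPred_eq] at hn ⊢
        omega)
    have hfd : A.D f d := (hD f d).2 fun n => by
      have := h n
      simp only [d, ofNat_apply]
      omega
    refine ⟨d, hfd, ext_val fun n => ?_⟩
    have := h n
    rw [hoplus f d hfd n]
    simp only [d, ofNat_apply]
    omega

theorem one_apply (n : ℕ) : (A.one.1 n : ℕ) = 2 := by
  have h := le_def.1 ((effect_le_iff hD hoplus _ _).1 (A.le_one (ofSet Set.univ))) n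
  have := val_le_two A.one n
  rw [ofSet_apply, if_pos (Set.mem_univ n)] at h
  omega

theorem zero_apply (n : ℕ) : (A.zero.1 n : ℕ) = 0 := by
  have h := A.one_max (ofSet ∅) ((hD _ _).2 fun n => by simp [one_apply hD hoplus])
  simp [← h]

theorem compl_apply (f : FinHalfSeq) (n : ℕ) : ((A.compl f).1 n : ℕ) = 2 - f.1 n := by
  let g := ofNat (fun n => 2 - (f.1 n : ℕ)) (fun n => by omega)
    ((finite_val_eq_one f).subset fun n hn => by
      have := val_le_two f n
      simp only [Set.mem_ofPred_eq] at hn ⊢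
      omega)
  have hfg : A.D f g := (hD f g).2 fun n => by
    have := val_le_two f n
    simp only [g, ofNat_apply]
    omega
  have h := A.compl_unique f g hfg (ext_val fun n => by
    have := val_le_two f n
    rw [hoplus f g hfg, one_apply hD hoplus]
    simp only [g, ofNat_apply]
    omega)
  simp [← h, g]

theorem exists_val_ne_zero {x : FinHalfSeq} (hx : x ≠ A.zero) : ∃ n, (x.1 n : ℕ) ≠ 0 := by
  by_contra! h
  exact hx (ext_val fun n => by rw [h n, zero_apply hD hoplus])

theorem sharp_iff {f : FinHalfSeq} : A.Sharp f ↔ ∀ n, f.1 n ≠ 1 := by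
  rw [sharp_iff_inf_compl_eq (effect_le_iff hD hoplus)]
  constructor
  · intro h n
    have := congrArg (fun g : FinHalfSeq => (g.1 n : ℕ)) h
    simp only [inf_apply, compl_apply hD hoplus, zero_apply hD hoplus] at this
    omega
  · intro h
    refine ext_val fun n => ?_
    have := h n
    have := val_le_two f n
    simp only [inf_apply, compl_apply hD hoplus, zero_apply hD hoplus]
    omega

theorem sharp_ofSet (s : Set ℕ) : A.Sharp (ofSet s) :=
  (sharp_iff hD hoplus).2 fun n => by
    have := ofSet_apply s n
    split_ifs at this <;> omega

theorem sumDef_apply {l : List FinHalfSeq} {s : FinHalfSeq} (h : A.SumDef l s) (n : ℕ) :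
    (s.1 n : ℕ) = (l.map fun f => (f.1 n : ℕ)).sum := by
  induction h with
  | nil => simp [zero_apply hD hoplus]
  | cons _ hd ih => simp [hoplus _ _ hd, ih]

theorem exists_sumDef (l : List FinHalfSeq) (hl : ∀ n, (l.map fun f => (f.1 n : ℕ)).sum ≤ 2) :
    ∃ s, A.SumDef l s := by
  induction l with
  | nil => exact ⟨A.zero, .nil⟩
  | cons f l ih =>
    simp only [List.map_cons, List.sum_cons] at hl
    obtain ⟨s, hs⟩ := ih fun n => by have := hl n; omega
    have hfs : A.D f s := (hD f s).2 fun n => by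
      rw [sumDef_apply hD hoplus hs n]
      exact hl n
    exact ⟨_, .cons hs hfs⟩

theorem isArchimedean : A.IsArchimedean := by
  intro x hx
  obtain ⟨n, hn⟩ := exists_val_ne_zero hD hoplus hx
  refine ⟨3, fun ⟨s, hs⟩ => ?_⟩
  have h := sumDef_apply hD hoplus hs n
  rw [List.map_replicate, List.sum_replicate, smul_eq_mul] at h
  have := val_le_two s n
  omega

theorem atom_isAtom (k : ℕ) : A.Atom (atom k) := by
  refine ⟨fun h => ?_, fun b hb => ?_⟩
  · have := congrArg (fun g : FinHalfSeq => (g.1 k : ℕ)) h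
    simp [zero_apply hD hoplus] at this
  have hb := le_def.1 ((effect_le_iff hD hoplus _ _).1 hb)
  have hb' : ∀ n, n ≠ k → (b.1 n : ℕ) = 0 := fun n h => by simpa [h] using hb n
  by_cases hk : (b.1 k : ℕ) = 0
  · refine .inl (ext_val fun n => ?_)
    rw [zero_apply hD hoplus]
    by_cases h : n = k
    · rwa [h]
    · exact hb' n h
  · refine .inr (ext_val fun n => ?_)
    by_cases h : n = k
    · subst h
      have := hb n
      simp only [atom_apply, if_true] at this ⊢
      omega
    · simp [h, hb' n h]

theorem atomic : A.Atomic := by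
  intro x hx
  obtain ⟨k, hk⟩ := exists_val_ne_zero hD hoplus hx
  refine ⟨atom k, atom_isAtom hD hoplus k,
    (effect_le_iff hD hoplus _ _).2 (le_def.2 fun n => ?_)⟩
  rw [atom_apply]
  split_ifs with h
  · subst h; omega
  · omega

theorem isLeast_sharp_ge (x : FinHalfSeq) :
    IsLeast {v | A.Sharp v ∧ x ≤ v} (ofSet {n | (x.1 n : ℕ) ≠ 0}) := by
  refine ⟨⟨sharp_ofSet hD hoplus _, le_def.2 fun n => ?_⟩,
    fun v ⟨hv, hxv⟩ => le_def.2 fun n => ?_⟩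
  · have := val_le_two x n
    rw [ofSet_apply]
    split_ifs with h
    · omega
    · exact (not_not.1 h).le
  · have := (sharp_iff hD hoplus).1 hv n
    have := le_def.1 hxv n
    have := val_le_two v n
    rw [ofSet_apply]
    split_ifs with h
    · have : (x.1 n : ℕ) ≠ 0 := h
      omega
    · omega

theorem mv : A.MV := by
  refine ⟨latticeOrdered (effect_le_iff hD hoplus), fun x y => ?_⟩
  obtain ⟨d, hd, hd'⟩ := (effect_le_iff hD hoplus _ _).2 (inf_le_right : x ⊓ y ≤ y)
  have hdn : ∀ n, (d.1 n : ℕ) = y.1 n - min (x.1 n : ℕ) (y.1 n) := fun n => by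
    have := hoplus _ _ hd n
    rw [hd', inf_apply] at this
    omega
  have hxd : A.D x d := (hD x d).2 fun n => by
    have := val_le_two x n
    have := val_le_two y n
    rw [hdn]
    omega
  refine compatible_of_oplus (effect_le_iff hD hoplus) hd hd' hxd (ext_val fun n => ?_)
  rw [hoplus _ _ hxd, hdn, sup_apply]
  omega

theorem central_iff_sharp {c : FinHalfSeq} : A.Central c ↔ A.Sharp c := by
  rw [central_iff (effect_le_iff hD hoplus), sharp_iff hD hoplus]
  constructor
  · intro h n
    have := congrArg (fun g : FinHalfSeq => (g.1 n : ℕ)) (h A.one)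
    simp only [sup_apply, inf_apply, compl_apply hD hoplus, one_apply hD hoplus] at this
    omega
  · intro h y
    refine ext_val fun n => ?_
    have := h n
    have := val_le_two c n
    simp only [sup_apply, inf_apply, compl_apply hD hoplus]
    omega

theorem isLUB_ofSet_of_subset_sharpSet {S : Set FinHalfSeq} (hS : S ⊆ A.sharpSet) :
    IsLUB S (ofSet {n | ∃ f ∈ S, (f.1 n : ℕ) = 2}) := by
  refine ⟨fun f hf => le_def.2 fun n => ?_, fun u hu => le_def.2 fun n => ?_⟩
  · have := (sharp_iff hD hoplus).1 (hS hf) n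
    have := val_le_two f n
    rw [ofSet_apply]
    split_ifs with h
    · omega
    · have : (f.1 n : ℕ) ≠ 2 := fun h2 => h ⟨f, hf, h2⟩
      omega
  · rw [ofSet_apply]
    split_ifs with h
    · obtain ⟨f, hf, h2⟩ := h
      have := le_def.1 (hu hf) n
      omega
    · omega

theorem isGLB_ofSet_of_subset_sharpSet {S : Set FinHalfSeq} (hS : S ⊆ A.sharpSet) :
    IsGLB S (ofSet {n | ∀ f ∈ S, (f.1 n : ℕ) = 2}) := by
  refine ⟨fun f hf => le_def.2 fun n => ?_, fun z hz => le_def.2 fun n => ?_⟩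
  · rw [ofSet_apply]
    split_ifs with h
    · exact (h f hf).ge
    · omega
  · have := val_le_two z n
    rw [ofSet_apply]
    split_ifs with h
    · omega
    · obtain ⟨f, hf, h2⟩ : ∃ f ∈ S, (f.1 n : ℕ) ≠ 2 := by simpa using h
      have := (sharp_iff hD hoplus).1 (hS hf) n
      have := le_def.1 (hz hf) n
      omega

theorem sumDef_map_atom_apply {l : List ℕ} (hl : l.Nodup) {s : FinHalfSeq}
    (hs : A.SumDef (l.map atom) s) (n : ℕ) : (s.1 n : ℕ) = if n ∈ l then 1 else 0 := by
  rw [sumDef_apply hD hoplus hs, List.map_map, ← hl.sum_map_ite_eq]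
  simp [Function.comp_def]

theorem atom_mem_finiteSums (k : ℕ) : atom k ∈ A.finiteSums atom := by
  obtain ⟨s, hs⟩ := exists_sumDef hD hoplus [atom k] fun n => by
    simp only [List.map_cons, List.map_nil, List.sum_cons, List.sum_nil, atom_apply]
    split_ifs <;> omega
  have : s = atom k := ext_val fun n => by
    rw [sumDef_map_atom_apply hD hoplus (List.nodup_singleton k) hs]
    simp [eq_comm]
  exact ⟨[k], List.nodup_singleton k, this ▸ hs⟩

theorem mem_upperBounds_finiteSums_atom {u : FinHalfSeq} :
    u ∈ upperBounds (A.finiteSums atom) ↔ ∀ n, 1 ≤ (u.1 n : ℕ) := by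
  constructor
  · intro hu n
    simpa using le_def.1 (hu (atom_mem_finiteSums hD hoplus n)) n
  · rintro hu s ⟨l, hl, hs⟩
    refine le_def.2 fun n => ?_
    have := hu n
    rw [sumDef_map_atom_apply hD hoplus hl hs]
    split_ifs <;> omega

theorem orthogonal_ofSet_singleton : A.Orthogonal fun k => ofSet {k} := by
  refine fun l hl => exists_sumDef hD hoplus _ fun n => ?_
  simp only [List.map_map, Function.comp_def, ofSet_apply, Set.mem_singleton_iff]
  rw [hl.sum_map_ite_eq]
  split_ifs <;> omega

theorem not_sharplyOrthocomplete : ¬ A.SharplyOrthocomplete := by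
  intro h
  have hdom : ∀ k, A.le (atom k) (ofSet {k}) := fun k =>
    (effect_le_iff hD hoplus _ _).2 (le_def.2 fun n => by
      simp only [atom_apply, ofSet_apply, Set.mem_singleton_iff]; split_ifs <;> omega)
  obtain ⟨v, -, hv⟩ := h ℕ atom (fun k => ofSet {k}) (fun k => sharp_ofSet hD hoplus _)
    (orthogonal_ofSet_singleton hD hoplus) hdom
  rw [isSupIn_univ_iff (effect_le_iff hD hoplus)] at hv
  have hv1 := (mem_upperBounds_finiteSums_atom hD hoplus).1 hv.1
  obtain ⟨m, hm⟩ : ∃ m, (v.1 m : ℕ) ≠ 1 := (finite_val_eq_one v).infinite_compl.nonempty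
  let u := atom m ⊔ ofSet {m}ᶜ
  have hu_apply : ∀ n, (u.1 n : ℕ) = if n = m then 1 else 2 := fun n => by
    by_cases h : n = m <;> simp [u, h]
  have hu : u ∈ upperBounds (A.finiteSums atom) :=
    (mem_upperBounds_finiteSums_atom hD hoplus).2 fun n => by rw [hu_apply]; split_ifs <;> omega
  have hvu := le_def.1 (hv.2 hu) m
  rw [hu_apply, if_pos rfl] at hvu
  have := hv1 m
  omega

theorem sharpSet_eq : A.sharpSet = {f | ∀ n, f.1 n ≠ 1} :=
  Set.ext fun _ => sharp_iff hD hoplus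

theorem centerSet_eq_sharpSet : A.centerSet = A.sharpSet :=
  Set.ext fun _ => central_iff_sharp hD hoplus

theorem completeIn_sharpSet : A.CompleteIn A.sharpSet :=
  completeIn_of_exists_isLUB_isGLB (effect_le_iff hD hoplus)
    (fun _ hS => ⟨_, sharp_ofSet hD hoplus _, isLUB_ofSet_of_subset_sharpSet hD hoplus hS⟩)
    (fun _ hS => ⟨_, sharp_ofSet hD hoplus _, isGLB_ofSet_of_subset_sharpSet hD hoplus hS⟩)

theorem bifull_sharpSet : A.Bifull A.sharpSet :=
  bifull_of_exists_isLUB (effect_le_iff hD hoplus)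
    (fun _ hS => ⟨_, sharp_ofSet hD hoplus _, isLUB_ofSet_of_subset_sharpSet hD hoplus hS⟩)

theorem booleanIn_sharpSet : A.BooleanIn A.sharpSet := by
  have hsharp : ∀ f, A.Sharp f ↔ ∀ n, f.1 n ≠ 1 := fun _ => sharp_iff hD hoplus
  refine booleanIn_of_closed (effect_le_iff hD hoplus)
    (fun x hx y hy => (hsharp _).2 fun n => ?_) (fun x hx y hy => (hsharp _).2 fun n => ?_)
    ((hsharp _).2 fun n => ?_) ((hsharp _).2 fun n => ?_) (fun x hx => (hsharp _).2 fun n => ?_)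
    (fun x hx => (sharp_iff_inf_compl_eq (effect_le_iff hD hoplus)).1 hx)
    (fun x hx => ext_val fun n => ?_)
  · have := (hsharp x).1 hx n
    have := (hsharp y).1 hy n
    have := inf_apply x y n
    omega
  · have := (hsharp x).1 hx n
    have := (hsharp y).1 hy n
    have := sup_apply x y n
    omega
  · have := zero_apply hD hoplus n
    omega
  · have := one_apply hD hoplus n
    omega
  · have := (hsharp x).1 hx n
    have := compl_apply hD hoplus x n
    omega
  · have := (hsharp x).1 hx n
    have := val_le_two x n
    rw [sup_apply, compl_apply hD hoplus, one_apply hD hoplus]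
    omega

end FinHalfSeq

theorem stmt14_general
    (A : EffectAlgebra {f : ℕ → Fin 3 // {n | f n = 1}.Finite})
    (hD : ∀ f g, A.D f g ↔ ∀ n, (f.1 n : ℕ) + (g.1 n : ℕ) ≤ 2)
    (hoplus : ∀ f g, A.D f g →
      ∀ n, ((A.oplus f g).1 n : ℕ) = (f.1 n : ℕ) + (g.1 n : ℕ)) :
    A.SharplyDominating ∧ A.IsArchimedean ∧ A.Atomic ∧ A.MV ∧
      ¬ A.SharplyOrthocomplete ∧
      A.sharpSet = {f | ∀ n, f.1 n ≠ 1} ∧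
      A.centerSet = A.sharpSet ∧
      A.CompleteIn A.sharpSet ∧ A.BooleanIn A.sharpSet ∧
      A.Bifull A.sharpSet :=
  ⟨sharplyDominating_of_isLeast (FinHalfSeq.effect_le_iff hD hoplus)
      fun x => ⟨_, FinHalfSeq.isLeast_sharp_ge hD hoplus x⟩,
    FinHalfSeq.isArchimedean hD hoplus, FinHalfSeq.atomic hD hoplus, FinHalfSeq.mv hD hoplus,
    FinHalfSeq.not_sharplyOrthocomplete hD hoplus, FinHalfSeq.sharpSet_eq hD hoplus,
    FinHalfSeq.centerSet_eq_sharpSet hD hoplus, FinHalfSeq.completeIn_sharpSet hD hoplus,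
    FinHalfSeq.booleanIn_sharpSet hD hoplus, FinHalfSeq.bifull_sharpSet hD hoplus⟩

/-- The sub-effect algebra of `∏_{n≥1} {0ₙ, aₙ, 1ₙ}` consisting of sequences with
finitely many coordinates equal to `a` (factors encoded as `Fin 3`, with `1`
playing the role of `a` and pointwise partial addition) is a sharply dominating
Archimedean atomic MV-effect algebra which is not sharply orthocomplete, and
`S(E) = C(E)` is the set of `{0,1}`-valued sequences, a complete Boolean algebra
bifull in `E`. -/
theorem stmt14
    (A : EffectAlgebra {f : ℕ → Fin 3 // {n | f n = 1}.Finite})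
    (hzero : ∀ n, (A.zero.1 n : ℕ) = 0)
    (hone : ∀ n, (A.one.1 n : ℕ) = 2)
    (hD : ∀ f g, A.D f g ↔ ∀ n, (f.1 n : ℕ) + (g.1 n : ℕ) ≤ 2)
    (hoplus : ∀ f g, A.D f g →
      ∀ n, ((A.oplus f g).1 n : ℕ) = (f.1 n : ℕ) + (g.1 n : ℕ))
    (hcompl : ∀ f n, ((A.compl f).1 n : ℕ) = 2 - (f.1 n : ℕ)) :
    A.SharplyDominating ∧ A.IsArchimedean ∧ A.Atomic ∧ A.MV ∧
      ¬ A.SharplyOrthocomplete ∧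
      A.sharpSet = {f | ∀ n, f.1 n ≠ 1} ∧
      A.centerSet = A.sharpSet ∧
      A.CompleteIn A.sharpSet ∧ A.BooleanIn A.sharpSet ∧
      A.Bifull A.sharpSet :=
  stmt14_general A hD hoplus
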